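/- Let $V_0 \in L^2([a,b]^2, \mathbb{R})$ be nonnegative and let $B: [a,b] \to [0,\infty)$ be measurable with $\int_a^b \left(\int_a^s V_0(s,t)^2\,dt\right)(1+B(s))\,ds < \infty$. Suppose $\mathbf{x}, \tilde{\mathbf{x}}: [a,b] \to \mathbb{R}^n$ and $\xi, \tilde{\xi}: [a,b] \to \mathbb{R}$ are square-integrable functions satisfying, for all $s \in [a,b]$: (i) $\|\mathbf{x}(s) - \tilde{\mathbf{x}}(s)\| \le \int_a^s V_0(s,t)\sqrt{\|\mathbf{x}(t)-\tilde{\mathbf{x}}(t)\|^2 + (\xi(t)-\tilde{\xi}(t))^2}\,dt$, and (ii) $\int_a^s (\xi(t)-\tilde{\xi}(t))^2\,dt \le B(s)\int_a^s \|\mathbf{x}(t)-\tilde{\mathbf{x}}(t)\|^2\,dt$. Then $\mathbf{x}(s) = \tilde{\mathbf{x}}(s)$ for almost every $s \in [a,b]$. -/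

import Mathlib

/-!
Write `u = ‖x - x'‖²`. Cauchy–Schwarz in (i), followed by (ii), gives
`u s ≤ g s * ∫_a^s u` with `g s = (∫_a^s V0(s,t)² dt) (1 + B s)` integrable. A Grönwall-type
continuous induction then shows that `Φ s = ∫_a^s u` vanishes on `[a, b]`: its zero set is closed
and contains `a`, and if `Φ c = 0` then for `d` slightly larger than `c` we get
`Φ d ≤ (∫_c^d |g|) Φ d` with `∫_c^d |g| < 1`, forcing `Φ d = 0`.
-/

open MeasureTheory Set Filter Topology

namespace MeasureTheory

section

variable {α : Type*} [MeasurableSpace α] {μ : Measure α}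

theorem sq_integral_mul_le_integral_sq_mul_integral_sq {f h : α → ℝ} (hf : MemLp f 2 μ)
    (hh : MemLp h 2 μ) :
    (∫ x, f x * h x ∂μ) ^ 2 ≤ (∫ x, f x ^ 2 ∂μ) * ∫ x, h x ^ 2 ∂μ := by
  have inner_toLp : ∀ {φ ψ : α → ℝ} (hφ : MemLp φ 2 μ) (hψ : MemLp ψ 2 μ),
      inner ℝ (hφ.toLp φ) (hψ.toLp ψ) = ∫ x, φ x * ψ x ∂μ := by
    intro φ ψ hφ hψ
    rw [L2.inner_def]
    refine integral_congr_ae ?_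
    filter_upwards [hφ.coeFn_toLp, hψ.coeFn_toLp] with x hφx hψx
    simp [hφx, hψx, mul_comm]
  have := real_inner_mul_inner_self_le (hf.toLp f) (hh.toLp h)
  simpa only [inner_toLp, sq] using this

theorem MemLp.sqrt_of_integrable {g : α → ℝ} (hg0 : ∀ x, 0 ≤ g x) (hg : Integrable g μ) :
    MemLp (fun x => √(g x)) 2 μ :=
  (memLp_two_iff_integrable_sq (Real.continuous_sqrt.comp_aestronglyMeasurable
    hg.aestronglyMeasurable)).2 (hg.congr (.of_forall fun x => (Real.sq_sqrt (hg0 x)).symm))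

end

theorem MemLp.ae_memLp_two_prodMk_left {α β F : Type*} [MeasurableSpace α] [MeasurableSpace β]
    [NormedAddCommGroup F] {μ : Measure α} {ν : Measure β} [SFinite μ] [SFinite ν]
    {f : α × β → F} (hf : MemLp f 2 (μ.prod ν)) :
    ∀ᵐ x ∂μ, MemLp (fun y => f (x, y)) 2 ν := by
  filter_upwards [hf.aestronglyMeasurable.prodMk_left,
    ((memLp_two_iff_integrable_sq_norm hf.aestronglyMeasurable).1 hf).prod_right_ae]
    with x hmeas hsq
  exact (memLp_two_iff_integrable_sq_norm hmeas).2 hsq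

end MeasureTheory

theorem sq_le_mul_one_add_mul_integral_of_le_integral_mul_sqrt {k u w : ℝ → ℝ}
    {a s y β : ℝ}
    (has : a ≤ s) (hk : MemLp k 2 (volume.restrict (Ioc a s)))
    (hu0 : ∀ t, 0 ≤ u t) (hu : IntegrableOn u (Ioc a s))
    (hw0 : ∀ t, 0 ≤ w t) (hw : IntegrableOn w (Ioc a s))
    (hy0 : 0 ≤ y) (hy : y ≤ ∫ t in a..s, k t * √(u t + w t))
    (hwu : ∫ t in a..s, w t ≤ β * ∫ t in a..s, u t) :
    y ^ 2 ≤ (∫ t in a..s, k t ^ 2) * (1 + β) * ∫ t in a..s, u t := by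
  simp only [intervalIntegral.integral_of_le has] at hy hwu ⊢
  have huw0 : ∀ t, 0 ≤ u t + w t := fun t => add_nonneg (hu0 t) (hw0 t)
  calc y ^ 2 ≤ (∫ t in Ioc a s, k t * √(u t + w t)) ^ 2 := pow_le_pow_left₀ hy0 hy 2
    _ ≤ (∫ t in Ioc a s, k t ^ 2) * ∫ t in Ioc a s, √(u t + w t) ^ 2 :=
      sq_integral_mul_le_integral_sq_mul_integral_sq hk (.sqrt_of_integrable huw0 (hu.add hw))
    _ = (∫ t in Ioc a s, k t ^ 2) * ((∫ t in Ioc a s, u t) + ∫ t in Ioc a s, w t) := by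
      simp only [Real.sq_sqrt (huw0 _), integral_add hu hw]
    _ ≤ (∫ t in Ioc a s, k t ^ 2) * ((1 + β) * ∫ t in Ioc a s, u t) := by
      exact mul_le_mul_of_nonneg_left (by linarith) (integral_nonneg fun t => sq_nonneg _)
    _ = _ := by ring

section

variable {u g : ℝ → ℝ} {a b : ℝ}

theorem intervalIntegrable_of_integrableOn_Icc {f : ℝ → ℝ} {c d : ℝ}
    (hf : IntegrableOn f (Icc a b))
    (hac : a ≤ c) (hcd : c ≤ d) (hdb : d ≤ b) : IntervalIntegrable f volume c d :=
  (hf.mono_set (by rw [uIcc_of_le hcd]; exact Icc_subset_Icc hac hdb)).intervalIntegrable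

theorem integral_le_integral_abs_mul_of_le_mul_integral {c d : ℝ} (hac : a ≤ c) (hcd : c ≤ d)
    (hdb : d ≤ b) (hu0 : ∀ t, 0 ≤ u t) (hu : IntegrableOn u (Icc a b))
    (hg : IntegrableOn g (Icc a b))
    (hle : ∀ᵐ t ∂volume.restrict (Icc a b), u t ≤ g t * ∫ r in a..t, u r)
    (hc : ∫ r in a..c, u r = 0) :
    ∫ r in a..d, u r ≤ (∫ t in c..d, |g t|) * ∫ r in a..d, u r := by
  have hsub : Ioc c d ⊆ Icc a b := Ioc_subset_Icc_self.trans (Icc_subset_Icc hac hdb)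
  have hu_ad := intervalIntegrable_of_integrableOn_Icc hu le_rfl (hac.trans hcd) hdb
  have hle_cd : ∀ᵐ t ∂volume.restrict (Ioc c d), u t ≤ |g t| * ∫ r in a..d, u r := by
    filter_upwards [ae_restrict_of_ae_restrict_of_subset hsub hle,
      ae_restrict_mem measurableSet_Ioc] with t hut ht
    have hmono : ∫ r in a..t, u r ≤ ∫ r in a..d, u r :=
      intervalIntegral.integral_mono_interval le_rfl (hac.trans ht.1.le) ht.2
        (.of_forall hu0) hu_ad
    calc u t ≤ g t * ∫ r in a..t, u r := hut
      _ ≤ |g t| * ∫ r in a..t, u r :=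
        mul_le_mul_of_nonneg_right (le_abs_self _)
          (intervalIntegral.integral_nonneg (hac.trans ht.1.le) fun r _ => hu0 r)
      _ ≤ |g t| * ∫ r in a..d, u r := mul_le_mul_of_nonneg_left hmono (abs_nonneg _)
  calc ∫ r in a..d, u r = ∫ r in c..d, u r := by
        rw [← intervalIntegral.integral_add_adjacent_intervals
          (intervalIntegrable_of_integrableOn_Icc hu le_rfl hac (hcd.trans hdb))
          (intervalIntegrable_of_integrableOn_Icc hu hac hcd hdb), hc, zero_add]
    _ ≤ ∫ t in c..d, |g t| * ∫ r in a..d, u r := by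
        simp only [intervalIntegral.integral_of_le hcd]
        exact setIntegral_mono_ae_restrict (hu.mono_set hsub)
          ((hg.mono_set hsub).abs.mul_const _) hle_cd
    _ = (∫ t in c..d, |g t|) * ∫ r in a..d, u r := intervalIntegral.integral_mul_const _ _

theorem ae_eq_zero_of_le_mul_integral (hab : a ≤ b) (hu0 : ∀ t, 0 ≤ u t)
    (hu : IntegrableOn u (Icc a b)) (hg : IntegrableOn g (Icc a b))
    (hle : ∀ᵐ t ∂volume.restrict (Icc a b), u t ≤ g t * ∫ r in a..t, u r) :
    u =ᵐ[volume.restrict (Icc a b)] 0 := by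
  suffices hb : ∫ r in a..b, u r = 0 by
    rw [← Measure.restrict_congr_set Ioc_ae_eq_Icc]
    rwa [intervalIntegral.integral_of_le hab, integral_eq_zero_iff_of_nonneg_ae
      (.of_forall hu0) (hu.mono_set Ioc_subset_Icc_self)] at hb
  have hprim := intervalIntegral.continuousOn_primitive_interval (μ := volume)
    (uIcc_of_le hab ▸ hu)
  rw [uIcc_of_le hab] at hprim
  refine IsClosed.mem_of_ge_of_forall_exists_gt (s := (fun s => ∫ r in a..s, u r) ⁻¹' {0})
    ?_ (by simp) hab ?_
  · rw [inter_comm]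
    exact hprim.preimage_isClosed_of_isClosed isClosed_Icc isClosed_singleton
  rintro c ⟨hc, hac, hcb⟩
  have hG : ContinuousWithinAt (fun d => ∫ t in c..d, |g t|) (Ioi c) c := by
    have hcont := intervalIntegral.continuousOn_primitive_interval (a := c) (b := b)
      (f := fun t => |g t|) (μ := volume)
      (by rw [uIcc_of_le hcb.le]; exact (hg.mono_set (Icc_subset_Icc hac le_rfl)).abs)
    rw [uIcc_of_le hcb.le] at hcont
    exact (hcont c (left_mem_Icc.2 hcb.le)).mono_of_mem_nhdsWithin
      (mem_of_superset (Ioc_mem_nhdsGT hcb) Ioc_subset_Icc_self)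
  have hsmall : ∀ᶠ d in 𝓝[>] c, ∫ t in c..d, |g t| < 1 :=
    hG.eventually_lt_const (by simp)
  obtain ⟨d, hd_small, hd⟩ := (hsmall.and (Ioc_mem_nhdsGT hcb)).exists
  refine ⟨d, ?_, hd⟩
  have hd_le := integral_le_integral_abs_mul_of_le_mul_integral hac hd.1.le hd.2 hu0 hu hg hle hc
  have hd_nonneg : 0 ≤ ∫ r in a..d, u r :=
    intervalIntegral.integral_nonneg (hac.trans hd.1.le) fun r _ => hu0 r
  show ∫ r in a..d, u r = 0
  nlinarith

end

theorem volterra_semiLipschitz_uniqueness_iteration_general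
    {n : ℕ} {a b : ℝ} (hab : a ≤ b)
    (V0 : ℝ → ℝ → ℝ) (B : ℝ → ℝ)
    (hV0L2 : MemLp (fun p : ℝ × ℝ => V0 p.1 p.2) 2
      (volume.restrict (Icc a b ×ˢ Icc a b)))
    (hfin : IntegrableOn (fun s => (∫ t in a..s, (V0 s t) ^ 2) * (1 + B s)) (Icc a b))
    (x x' : ℝ → EuclideanSpace ℝ (Fin n)) (ξ ξ' : ℝ → ℝ)
    (hx : MemLp x 2 (volume.restrict (Icc a b)))
    (hx' : MemLp x' 2 (volume.restrict (Icc a b)))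
    (hξ : MemLp ξ 2 (volume.restrict (Icc a b)))
    (hξ' : MemLp ξ' 2 (volume.restrict (Icc a b)))
    (h1 : ∀ s ∈ Icc a b,
      ‖x s - x' s‖ ≤ ∫ t in a..s,
        V0 s t * Real.sqrt (‖x t - x' t‖ ^ 2 + (ξ t - ξ' t) ^ 2))
    (h2 : ∀ s ∈ Icc a b,
      (∫ t in a..s, (ξ t - ξ' t) ^ 2) ≤ B s * ∫ t in a..s, ‖x t - x' t‖ ^ 2) :
    ∀ᵐ s ∂(volume.restrict (Icc a b)), x s = x' s := by
  have hu : IntegrableOn (fun t => ‖x t - x' t‖ ^ 2) (Icc a b) :=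
    (hx.sub hx').norm.integrable_sq
  have hw : IntegrableOn (fun t => (ξ t - ξ' t) ^ 2) (Icc a b) := (hξ.sub hξ').integrable_sq
  have hslice :
      ∀ᵐ s ∂volume.restrict (Icc a b), MemLp (V0 s) 2 (volume.restrict (Icc a b)) := by
    rw [Measure.volume_eq_prod, ← Measure.prod_restrict] at hV0L2
    exact hV0L2.ae_memLp_two_prodMk_left
  have hkey : ∀ᵐ s ∂volume.restrict (Icc a b), ‖x s - x' s‖ ^ 2 ≤
      (∫ t in a..s, (V0 s t) ^ 2) * (1 + B s) * ∫ t in a..s, ‖x t - x' t‖ ^ 2 := by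
    filter_upwards [hslice, ae_restrict_mem measurableSet_Icc] with s hV0s hs
    have hsub : Ioc a s ⊆ Icc a b := Ioc_subset_Icc_self.trans (Icc_subset_Icc le_rfl hs.2)
    exact sq_le_mul_one_add_mul_integral_of_le_integral_mul_sqrt hs.1
      (hV0s.mono_measure (Measure.restrict_mono hsub le_rfl)) (fun t => sq_nonneg _)
      (hu.mono_set hsub) (fun t => sq_nonneg _) (hw.mono_set hsub) (norm_nonneg _)
      (h1 s hs) (h2 s hs)
  filter_upwards [ae_eq_zero_of_le_mul_integral hab (fun t => sq_nonneg _) hu hfin hkey]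
    with s hs
  simpa [sub_eq_zero] using hs

theorem volterra_semiLipschitz_uniqueness_iteration
    {n : ℕ} {a b : ℝ} (hab : a ≤ b)
    (V0 : ℝ → ℝ → ℝ) (B : ℝ → ℝ)
    (hV0nn : ∀ s t, 0 ≤ V0 s t)
    (hV0L2 : MemLp (fun p : ℝ × ℝ => V0 p.1 p.2) 2
      (volume.restrict (Icc a b ×ˢ Icc a b)))
    (hBmeas : Measurable B) (hBnn : ∀ s, 0 ≤ B s)
    (hfin : IntegrableOn (fun s => (∫ t in a..s, (V0 s t) ^ 2) * (1 + B s)) (Icc a b))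
    (x x' : ℝ → EuclideanSpace ℝ (Fin n)) (ξ ξ' : ℝ → ℝ)
    (hx : MemLp x 2 (volume.restrict (Icc a b)))
    (hx' : MemLp x' 2 (volume.restrict (Icc a b)))
    (hξ : MemLp ξ 2 (volume.restrict (Icc a b)))
    (hξ' : MemLp ξ' 2 (volume.restrict (Icc a b)))
    (h1 : ∀ s ∈ Icc a b,
      ‖x s - x' s‖ ≤ ∫ t in a..s,
        V0 s t * Real.sqrt (‖x t - x' t‖ ^ 2 + (ξ t - ξ' t) ^ 2))
    (h2 : ∀ s ∈ Icc a b,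
      (∫ t in a..s, (ξ t - ξ' t) ^ 2) ≤ B s * ∫ t in a..s, ‖x t - x' t‖ ^ 2) :
    ∀ᵐ s ∂(volume.restrict (Icc a b)), x s = x' s :=
  volterra_semiLipschitz_uniqueness_iteration_general hab V0 B hV0L2 hfin x x' ξ ξ' hx hx' hξ hξ' h1
    h2
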